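/- arXiv:0803.2351 — 8 statements merged into one kernel-verified Lean document; each statement's English description precedes it below -/
import Mathlib

section
/- The set V of very well approximable numbers, i.e., the set of x ∈ [0,1) such that for some ε > 0 the inequality ‖q·x‖ < q^{-(1+ε)} holds for infinitely many q ∈ ℕ, has Lebesgue measure zero. -/
open MeasureTheory Set

/-! An irrational `x` with `‖q x‖ < q^{-(1+ε)}` for infinitely many `q` satisfies
`|x - p/q| < q^{-(2+ε)}` infinitely often, i.e. it is Liouville with exponent `2 + ε > 2`.
By Borel–Cantelli, numbers that are Liouville with some exponent `> 2` form a null set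
(`volume_iUnion_setOfPred_liouvilleWith`), and the rationals are countable. -/

lemma abs_sub_div_lt_of_abs_mul_sub_lt {x ε : ℝ} {q : ℕ} {m : ℤ} (hq : 0 < q)
    (h : |(q : ℝ) * x - m| < (q : ℝ) ^ (-(1 + ε))) :
    |x - m / q| < 1 / (q : ℝ) ^ (2 + ε) := by
  have hq0 : (0 : ℝ) < q := Nat.cast_pos.2 hq
  have hdiv : x - m / q = ((q : ℝ) * x - m) / q := by field_simp
  rw [hdiv, abs_div, abs_of_pos hq0, div_lt_iff₀ hq0]
  calc |(q : ℝ) * x - m| < (q : ℝ) ^ (-(1 + ε)) := h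
    _ = 1 / (q : ℝ) ^ (2 + ε) * q := by
      rw [show (2 : ℝ) + ε = (1 + ε) + 1 by ring, Real.rpow_add hq0, Real.rpow_one,
        Real.rpow_neg hq0.le]
      field_simp

theorem Irrational.liouvilleWith_of_infinite_abs_mul_sub_round_lt {x ε : ℝ} (hx : Irrational x)
    (h : {q : ℕ | 0 < q ∧
      |(q : ℝ) * x - round ((q : ℝ) * x)| < (q : ℝ) ^ (-(1 + ε))}.Infinite) :
    LiouvilleWith (2 + ε) x := by
  refine ⟨1, (Nat.frequently_atTop_iff_infinite.2 h).mono ?_⟩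
  rintro q ⟨hq, hlt⟩
  refine ⟨round ((q : ℝ) * x), fun hxq => hx.ne_rat (round ((q : ℝ) * x) / q) ?_,
    abs_sub_div_lt_of_abs_mul_sub_lt hq hlt⟩
  push_cast
  exact hxq

theorem borel_very_well_approximable_null :
    volume {x : ℝ | x ∈ Ico (0:ℝ) 1 ∧ ∃ ε : ℝ, 0 < ε ∧
      {q : ℕ | 0 < q ∧
        |(q : ℝ) * x - round ((q : ℝ) * x)| < (q : ℝ) ^ (-(1 + ε))}.Infinite} = 0 := by
  refine measure_mono_null
    (t := range ((↑) : ℚ → ℝ) ∪ ⋃ (p : ℝ) (_ : 2 < p), {x | LiouvilleWith p x}) ?_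
    (measure_union_null ((countable_range _).measure_zero _) volume_iUnion_setOfPred_liouvilleWith)
  rintro x ⟨-, ε, hε, hinf⟩
  by_cases hx : Irrational x
  · exact Or.inr (mem_iUnion₂.2
      ⟨2 + ε, by linarith, hx.liouvilleWith_of_infinite_abs_mul_sub_round_lt hinf⟩)
  · exact Or.inl (not_not.1 hx)
end

section
/- Let n ≥ 1, m ≥ 1 and ψ : ℕ → [0,∞) with ∑_{r=1}^∞ r^{n-1}·ψ(r)^m < ∞. Then the set of n×m real matrices X ∈ [0,1)^{nm} such that max_{1≤j≤m} ‖∑_{i=1}^n q_i X_{ij}‖ < ψ(max_i |q_i|) for infinitely many nonzero q ∈ ℤ^n has nm-dimensional Lebesgue measure zero. -/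
/-!
Borel–Cantelli. For a fixed `q ≠ 0`, the matrices `X` in the unit cube with `‖q · X_j‖ < ε` for
every column `j` form a set of measure `O(ε^m)`: integrate first over a row `i` with `q i ≠ 0`;
for the other rows fixed, each column condition confines `X i j` to `O(|q i|)` intervals of length
`2ε / |q i|`. There are `O(r^(n-1))` vectors `q` with `|q| = r`, so the union of these sets over the
shell `|q| = r` has measure `O(r^(n-1) ψ(r)^m)`, which is summable.
-/

open MeasureTheory Set Filter
open scoped ENNReal

lemma volume_setOf_near_int_le {a : ℝ} (ha : 1 ≤ |a|) (c : ℝ) {ε : ℝ} (hε : 0 ≤ ε) :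
    volume {t ∈ Ico (0 : ℝ) 1 | ∃ k : ℤ, |a * t + c - k| < ε} ≤ ENNReal.ofReal (8 * ε) := by
  rcases le_or_gt (1 / 2) ε with hbig | hsmall
  · calc volume {t ∈ Ico (0 : ℝ) 1 | ∃ k : ℤ, |a * t + c - k| < ε}
        ≤ volume (Ico (0 : ℝ) 1) := measure_mono fun t ht => ht.1
      _ ≤ ENNReal.ofReal (8 * ε) := by
        rw [Real.volume_Ico]; exact ENNReal.ofReal_le_ofReal (by linarith)
  have ha0 : a ≠ 0 := abs_pos.mp (by linarith)
  set K := Finset.Icc ⌈c - |a| - ε⌉ ⌊c + |a| + ε⌋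
  have hcover : {t ∈ Ico (0 : ℝ) 1 | ∃ k : ℤ, |a * t + c - k| < ε} ⊆
      ⋃ k ∈ K, (a * ·) ⁻¹' Metric.ball (k - c) ε := by
    rintro t ⟨⟨ht0, ht1⟩, k, hk⟩
    have hat : |a * t| ≤ |a| := by
      rw [abs_mul, abs_of_nonneg ht0]; exact mul_le_of_le_one_right (abs_nonneg a) ht1.le
    rw [abs_lt] at hk
    rw [abs_le] at hat
    refine mem_biUnion (x := k) (Finset.mem_Icc.2 ⟨Int.ceil_le.2 ?_, Int.le_floor.2 ?_⟩) ?_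
    · linarith
    · linarith
    · rw [mem_preimage, Real.ball_eq_Ioo]; constructor <;> linarith
  have hcard : (K.card : ℝ) ≤ 2 * |a| + 2 * ε + 1 := by
    have h1 := Int.le_ceil (c - |a| - ε)
    have h2 := Int.floor_le (c + |a| + ε)
    rw [Int.card_Icc, ← Int.cast_natCast, Int.toNat_eq_max]
    push_cast
    exact max_le (by linarith) (by positivity)
  calc volume {t ∈ Ico (0 : ℝ) 1 | ∃ k : ℤ, |a * t + c - k| < ε}
      ≤ ∑ k ∈ K, volume ((a * ·) ⁻¹' Metric.ball (k - c : ℝ) ε) :=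
        (measure_mono hcover).trans (measure_biUnion_finset_le _ _)
    _ = K.card * ENNReal.ofReal (2 * ε / |a|) := by
        simp only [Real.volume_preimage_mul_left ha0, Real.volume_ball, Finset.sum_const,
          nsmul_eq_mul]
        rw [← ENNReal.ofReal_mul (by positivity), abs_inv]; ring_nf
    _ ≤ ENNReal.ofReal (8 * ε) := by
        rw [← ENNReal.ofReal_natCast, ← ENNReal.ofReal_mul (by positivity)]
        refine ENNReal.ofReal_le_ofReal ?_
        rw [mul_div_assoc', div_le_iff₀ (by linarith)]
        nlinarith

namespace MeasureTheory.Measure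

variable {α β : Type*} [MeasurableSpace α] [MeasurableSpace β] {μ : Measure α} {ν : Measure β}
  [SFinite μ] [SFinite ν]

lemma prod_apply_le_of_slice_le {s : Set (α × β)} (hs : MeasurableSet s) {t : Set β}
    (ht : MeasurableSet t) (hst : ∀ p ∈ s, p.2 ∈ t) {δ : ℝ≥0∞}
    (hδ : ∀ y ∈ t, μ ((·, y) ⁻¹' s) ≤ δ) : μ.prod ν s ≤ δ * ν t := by
  rw [prod_apply_symm hs, ← lintegral_indicator_const ht]
  refine lintegral_mono fun y => ?_
  by_cases hy : y ∈ t
  · simpa [hy] using hδ y hy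
  · have : (·, y) ⁻¹' s = ∅ := eq_empty_of_forall_notMem fun x hx => hy (hst _ hx)
    simp [this]

end MeasureTheory.Measure

section IntShell

open Finset

variable (ι : Type*) [Fintype ι] [DecidableEq ι]

noncomputable def intShell (r : ℕ) : Finset (ι → ℤ) :=
  {q ∈ Fintype.piFinset fun _ => Icc (-(r : ℤ)) r | q ≠ 0 ∧ univ.sup (fun i => (q i).natAbs) = r}

variable {ι}

lemma mem_intShell {r : ℕ} {q : ι → ℤ} :
    q ∈ intShell ι r ↔ q ≠ 0 ∧ univ.sup (fun i => (q i).natAbs) = r := by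
  refine ⟨fun h => (mem_filter.1 h).2, fun h => mem_filter.2 ⟨?_, h⟩⟩
  refine Fintype.mem_piFinset.2 fun i => mem_Icc.2 ?_
  have : (q i).natAbs ≤ r := h.2 ▸ le_sup (f := fun i => (q i).natAbs) (Finset.mem_univ i)
  omega

lemma card_intShell_le (r : ℕ) :
    #(intShell ι r) ≤ 2 * Fintype.card ι * (3 * r) ^ (Fintype.card ι - 1) := by
  rcases Nat.eq_zero_or_pos r with rfl | hr
  · suffices intShell ι 0 = ∅ by simp [this]
    refine eq_empty_of_forall_notMem fun q hq => (mem_intShell.1 hq).1 (funext fun i => ?_)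
    have := (mem_intShell.1 hq).2 ▸ le_sup (f := fun i => (q i).natAbs) (Finset.mem_univ i)
    simpa using this
  let face (i : ι) : Finset (ι → ℤ) :=
    Fintype.piFinset fun j => if j = i then {-(r : ℤ), (r : ℤ)} else Icc (-(r : ℤ)) r
  have hsub : intShell ι r ⊆ univ.biUnion face := by
    intro q hq
    obtain ⟨hq0, hsup⟩ := mem_intShell.1 hq
    obtain ⟨i₀, -⟩ := Function.ne_iff.mp hq0
    obtain ⟨i, -, hi⟩ := exists_mem_eq_sup univ ⟨i₀, Finset.mem_univ i₀⟩ fun i => (q i).natAbs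
    refine mem_biUnion.2 ⟨i, Finset.mem_univ i, Fintype.mem_piFinset.2 fun j => ?_⟩
    split_ifs with hj
    · subst hj
      simp only [Finset.mem_insert, Finset.mem_singleton]
      omega
    · exact Fintype.mem_piFinset.1 (mem_filter.1 hq).1 j
  have hface (i : ι) : #(face i) ≤ 2 * (3 * r) ^ (Fintype.card ι - 1) := by
    simp only [face, Fintype.card_piFinset, apply_ite, Int.card_Icc]
    rw [prod_ite, filter_eq', filter_ne', if_pos (Finset.mem_univ i), Finset.prod_singleton,
      prod_const, card_erase_of_mem (Finset.mem_univ i), card_univ]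
    gcongr
    · exact card_le_two
    · omega
  calc #(intShell ι r) ≤ ∑ i, #(face i) := (Finset.card_le_card hsub).trans card_biUnion_le
    _ ≤ ∑ _i : ι, 2 * (3 * r) ^ (Fintype.card ι - 1) := sum_le_sum fun i _ => hface i
    _ = 2 * Fintype.card ι * (3 * r) ^ (Fintype.card ι - 1) := by
      rw [sum_const, card_univ, smul_eq_mul]; ring

end IntShell

def unitCube (ι κ : Type*) : Set (ι → κ → ℝ) := {Y | ∀ i j, Y i j ∈ Ico 0 1}

section UnitCube

variable {ι κ : Type*} [Fintype ι] [Fintype κ]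

lemma measurableSet_unitCube : MeasurableSet (unitCube ι κ) := by
  unfold unitCube; measurability

lemma volume_unitCube : volume (unitCube ι κ) = 1 := by
  have : unitCube ι κ = univ.pi fun _ => univ.pi fun _ => Ico 0 1 := by
    ext; simp [unitCube, Set.mem_pi]
  rw [this, volume_pi_pi]
  simp [volume_pi_pi, Real.volume_Ico]

end UnitCube

namespace Groshev

open Finset

def approxSet {n : ℕ} (κ : Type*) (q : Fin n → ℤ) (ε : ℝ) : Set (Fin n → κ → ℝ) :=
  {X ∈ unitCube (Fin n) κ | ∀ j, ∃ k : ℤ, |∑ i, (q i : ℝ) * X i j - k| < ε}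

variable {n : ℕ} {κ : Type*} [Fintype κ]

lemma measurableSet_approxSet (q : Fin n → ℤ) (ε : ℝ) : MeasurableSet (approxSet κ q ε) := by
  unfold approxSet unitCube; measurability

lemma volume_approxSet_le {q : Fin n → ℤ} (hq : q ≠ 0) {ε : ℝ} (hε : 0 ≤ ε) :
    volume (approxSet κ q ε) ≤ ENNReal.ofReal (8 * ε) ^ Fintype.card κ := by
  obtain ⟨i₀, hi₀⟩ := Function.ne_iff.mp hq
  obtain ⟨n, rfl⟩ : ∃ n', n = n' + 1 := Nat.exists_eq_succ_of_ne_zero i₀.pos.ne'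
  set e := MeasurableEquiv.piFinSuccAbove (fun _ : Fin (n + 1) => κ → ℝ) i₀
  have hS := measurableSet_approxSet (κ := κ) q ε
  rw [← (volume_preserving_piFinSuccAbove (fun _ => κ → ℝ) i₀).symm.measure_preimage
    hS.nullMeasurableSet, ← mul_one (ENNReal.ofReal (8 * ε) ^ Fintype.card κ),
    ← volume_unitCube (ι := Fin n) (κ := κ)]
  refine Measure.prod_apply_le_of_slice_le (μ := volume) (ν := volume)
    (hS.preimage e.symm.measurable) measurableSet_unitCube ?_ fun Y _ => ?_
  · rintro ⟨v, Y⟩ ⟨hX, -⟩ i j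
    simpa [e] using hX (i₀.succAbove i) j
  calc volume ((·, Y) ⁻¹' (e.symm ⁻¹' approxSet κ q ε))
      ≤ volume (univ.pi fun j => {t ∈ Ico (0 : ℝ) 1 | ∃ k : ℤ,
          |q i₀ * t + ∑ i, (q (i₀.succAbove i) : ℝ) * Y i j - k| < ε}) := by
        refine measure_mono fun v ⟨hX, hk⟩ j _ => ⟨?_, ?_⟩
        · simpa [e] using hX i₀ j
        · simpa [e, Fin.sum_univ_succAbove _ i₀] using hk j
    _ ≤ ENNReal.ofReal (8 * ε) ^ Fintype.card κ := by
        rw [volume_pi_pi]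
        refine (prod_le_prod' fun j _ => volume_setOf_near_int_le ?_ _ hε).trans (by simp)
        exact_mod_cast Int.one_le_abs hi₀

lemma volume_biUnion_intShell_approxSet_le (r : ℕ) {ε : ℝ} (hε : 0 ≤ ε) :
    volume (⋃ q ∈ intShell (Fin n) r, approxSet κ q ε) ≤
      ENNReal.ofReal (2 * n * 3 ^ (n - 1) * 8 ^ Fintype.card κ *
        (r ^ (n - 1) * ε ^ Fintype.card κ)) := by
  calc volume (⋃ q ∈ intShell (Fin n) r, approxSet κ q ε)
      ≤ ∑ q ∈ intShell (Fin n) r, volume (approxSet κ q ε) := measure_biUnion_finset_le _ _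
    _ ≤ #(intShell (Fin n) r) * ENNReal.ofReal (8 * ε) ^ Fintype.card κ := by
        grw [sum_le_sum fun q hq => volume_approxSet_le (mem_intShell.1 hq).1 hε, sum_const,
          nsmul_eq_mul]
    _ ≤ _ := by
        rw [← ENNReal.ofReal_natCast, ← ENNReal.ofReal_pow (by positivity),
          ← ENNReal.ofReal_mul (by positivity)]
        refine ENNReal.ofReal_le_ofReal ?_
        have hcard : (#(intShell (Fin n) r) : ℝ) ≤ 2 * n * (3 * r) ^ (n - 1) := by
          exact_mod_cast (Fintype.card_fin n ▸ card_intShell_le (ι := Fin n) r)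
        calc (#(intShell (Fin n) r) : ℝ) * (8 * ε) ^ Fintype.card κ
            ≤ 2 * n * (3 * r) ^ (n - 1) * (8 * ε) ^ Fintype.card κ := by gcongr
          _ = _ := by ring

end Groshev

theorem groshev_convergence_general (n m : ℕ) (ψ : ℕ → ℝ)
    (hψ : ∀ r, 0 ≤ ψ r)
    (hsum : Summable fun r : ℕ => (r : ℝ) ^ (n - 1) * ψ r ^ m) :
    volume {X : Fin n → Fin m → ℝ | (∀ i j, X i j ∈ Ico (0:ℝ) 1) ∧
      {q : Fin n → ℤ | q ≠ 0 ∧ ∀ j,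
        |(∑ i, (q i : ℝ) * X i j) - round (∑ i, (q i : ℝ) * X i j)| <
          ψ (Finset.univ.sup fun i => (q i).natAbs)}.Infinite} = 0 := by
  set E : ℕ → Set (Fin n → Fin m → ℝ) := fun r =>
    ⋃ q ∈ intShell (Fin n) r, Groshev.approxSet (Fin m) q (ψ r)
  refine measure_mono_null ?_ (measure_limsup_atTop_eq_zero (s := E) ?_)
  · rintro X ⟨hX, hinf⟩
    rw [mem_limsup_iff_frequently_mem, Nat.frequently_atTop_iff_infinite]
    refine fun hfin => hinf ((hfin.biUnion fun r _ => (intShell (Fin n) r).finite_toSet).subset ?_)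
    rintro q ⟨hq0, hq⟩
    have hqr := mem_intShell.2 ⟨hq0, rfl⟩
    exact mem_biUnion (mem_biUnion hqr ⟨hX, fun j => ⟨_, hq j⟩⟩ : X ∈ E _) hqr
  · refine ne_top_of_le_ne_top
      (hsum.mul_left (2 * n * 3 ^ (n - 1) * 8 ^ m : ℝ)).tsum_ofReal_ne_top
      (ENNReal.tsum_le_tsum fun r => ?_)
    simpa using Groshev.volume_biUnion_intShell_approxSet_le (κ := Fin m) r (hψ r)

theorem groshev_convergence (n m : ℕ) (hn : 1 ≤ n) (hm : 1 ≤ m) (ψ : ℕ → ℝ)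
    (hψ : ∀ r, 0 ≤ ψ r)
    (hsum : Summable fun r : ℕ => (r : ℝ) ^ (n - 1) * ψ r ^ m) :
    volume {X : Fin n → Fin m → ℝ | (∀ i j, X i j ∈ Ico (0:ℝ) 1) ∧
      {q : Fin n → ℤ | q ≠ 0 ∧ ∀ j,
        |(∑ i, (q i : ℝ) * X i j) - round (∑ i, (q i : ℝ) * X i j)| <
          ψ (Finset.univ.sup fun i => (q i).natAbs)}.Infinite} = 0 :=
  groshev_convergence_general n m ψ hψ hsum
end

section
/- Let m ≥ 2 and ψ : ℕ → [0,∞). Then ∑_{r=1}^∞ N_m(r) · max_{t≥1} (ψ(rt)/(rt))^m = ∞ if and only if ∑_{r=1}^∞ ψ(r)^m = ∞, where N_m(r) = #{p ∈ ℤ^m : 0 ≤ p_i < r, gcd(p_1,…,p_m,r)=1}. More precisely, the two sums are comparable: each is bounded above by a constant (depending only on m) times the other. -/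
/-!
Trivially `N_m(r) ≤ r^m`. Conversely, a tuple counted by `r^m` but not by `N_m(r)` has all
entries divisible by some prime `p ∣ r`; there are at most `(r/p)^m ≤ r^m/p^2` such tuples
for each `p` since `m ≥ 2`, and `∑ 1/p^2 ≤ π^2/6 - 1 < 3/4`, so `r^m ≤ 4 N_m(r)`.

With `N_m(r) ≤ r^m`, bounding the supremum over `t` by the sum gives
`N_m(r) · max_t (ψ(rt)/(rt))^m ≤ ∑_t ψ(rt)^m / t^2`; for fixed `t` the map `r ↦ rt` is
injective, so the double sum is at most `ζ(2) ∑_q ψ(q)^m`. In the other direction the term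
`t = 1` alone gives `ψ(r)^m = r^m (ψ(r)/r)^m ≤ 4 N_m(r) (ψ(r)/r)^m`.
-/

open scoped ENNReal
open Finset

def coprimeTuples (m r : ℕ) : Finset (Fin m → ℕ) :=
  {p ∈ Fintype.piFinset fun _ => range r | Nat.gcd (univ.gcd p) r = 1}

theorem natCard_coprime_eq_card_coprimeTuples (m r : ℕ) :
    Nat.card {p : Fin m → ℕ // (∀ i, p i < r) ∧ Nat.gcd (univ.gcd fun i => p i) r = 1} =
      #(coprimeTuples m r) :=
  Nat.subtype_card _ fun p => by simp [coprimeTuples]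

theorem card_coprimeTuples_le (m r : ℕ) : #(coprimeTuples m r) ≤ r ^ m :=
  (card_filter_le _ _).trans (by simp)

theorem card_filter_forall_dvd_le {m r d : ℕ} (hd : d ∣ r) :
    #{p ∈ Fintype.piFinset (fun _ : Fin m => range r) | ∀ i, d ∣ p i} ≤ (r / d) ^ m := by
  calc _ ≤ #((Fintype.piFinset fun _ : Fin m => range (r / d)).image fun q i => d * q i) := by
        refine card_le_card fun p hp => ?_
        simp only [mem_filter, Fintype.mem_piFinset, mem_range] at hp
        refine mem_image.2 ⟨fun i => p i / d, ?_, funext fun i => Nat.mul_div_cancel' (hp.2 i)⟩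
        simpa using fun i => Nat.div_lt_div_of_lt_of_dvd hd (hp.1 i)
    _ ≤ (r / d) ^ m := card_image_le.trans (by simp)

theorem sum_one_div_sq_le {F : Finset ℕ} (hF : ∀ d ∈ F, 2 ≤ d) :
    ∑ d ∈ F, 1 / (d : ℝ) ^ 2 ≤ 3 / 4 := by
  have h1 : 1 ∉ F := fun h => by simpa using hF 1 h
  have hzeta := sum_le_hasSum (insert 1 F) (fun _ _ => by positivity) hasSum_zeta_two
  rw [sum_insert h1] at hzeta
  nlinarith [Real.pi_lt_d2, Real.pi_pos]

theorem div_pow_le_pow_mul_one_div_sq {m : ℕ} (hm : 2 ≤ m) {x s : ℝ} (hx : 0 ≤ x) (hs : 1 ≤ s) :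
    (x / s) ^ m ≤ x ^ m * (1 / s ^ 2) :=
  calc (x / s) ^ m = x ^ m * (1 / s) ^ m := by rw [div_eq_mul_one_div, mul_pow]
    _ ≤ x ^ m * (1 / s) ^ 2 := mul_le_mul_of_nonneg_left
        (pow_le_pow_of_le_one (by positivity) (div_le_one_of_le₀ hs (by positivity)) hm)
        (by positivity)
    _ = x ^ m * (1 / s ^ 2) := by rw [one_div_pow]

theorem card_filter_not_coprime_le {m r : ℕ} (hm : 2 ≤ m) (hr : r ≠ 0) :
    (#{p ∈ Fintype.piFinset (fun _ : Fin m => range r) | Nat.gcd (univ.gcd p) r ≠ 1} : ℝ) ≤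
      3 / 4 * r ^ m := by
  set T := Fintype.piFinset fun _ : Fin m => range r
  have hcover : {p ∈ T | Nat.gcd (univ.gcd p) r ≠ 1} ⊆
      r.primeFactors.biUnion fun d => {p ∈ T | ∀ i, d ∣ p i} := by
    intro p hp
    rw [mem_filter] at hp
    obtain ⟨d, hd, hdvd⟩ := Nat.exists_prime_and_dvd hp.2
    exact mem_biUnion.2 ⟨d, Nat.mem_primeFactors.2 ⟨hd, hdvd.trans (Nat.gcd_dvd_right _ _), hr⟩,
      mem_filter.2 ⟨hp.1, fun i => (hdvd.trans (Nat.gcd_dvd_left _ _)).trans (gcd_dvd (mem_univ i))⟩⟩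
  have hterm (d : ℕ) (hd : d ∈ r.primeFactors) :
      (#{p ∈ T | ∀ i, d ∣ p i} : ℝ) ≤ r ^ m * (1 / (d : ℝ) ^ 2) := by
    obtain ⟨hdp, hdr, -⟩ := Nat.mem_primeFactors.1 hd
    have hd1 : (1 : ℝ) ≤ d := by exact_mod_cast hdp.one_lt.le
    calc (#{p ∈ T | ∀ i, d ∣ p i} : ℝ) ≤ ((r / d : ℕ) : ℝ) ^ m := by
          exact_mod_cast card_filter_forall_dvd_le hdr
      _ ≤ ((r : ℝ) / d) ^ m := by gcongr; exact Nat.cast_div_le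
      _ ≤ r ^ m * (1 / (d : ℝ) ^ 2) := div_pow_le_pow_mul_one_div_sq hm (by positivity) hd1
  calc (#{p ∈ T | Nat.gcd (univ.gcd p) r ≠ 1} : ℝ)
      ≤ ∑ d ∈ r.primeFactors, (#{p ∈ T | ∀ i, d ∣ p i} : ℝ) := by
        exact_mod_cast (card_le_card hcover).trans card_biUnion_le
    _ ≤ ∑ d ∈ r.primeFactors, r ^ m * (1 / (d : ℝ) ^ 2) := sum_le_sum hterm
    _ ≤ r ^ m * (3 / 4) := by
        rw [← mul_sum]
        gcongr
        exact sum_one_div_sq_le fun d hd => (Nat.prime_of_mem_primeFactors hd).two_le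
    _ = 3 / 4 * r ^ m := mul_comm _ _

theorem pow_le_four_mul_card_coprimeTuples {m r : ℕ} (hm : 2 ≤ m) (hr : r ≠ 0) :
    r ^ m ≤ 4 * #(coprimeTuples m r) := by
  have hsplit : (#(coprimeTuples m r) : ℝ) +
      #{p ∈ Fintype.piFinset (fun _ : Fin m => range r) | Nat.gcd (univ.gcd p) r ≠ 1} = r ^ m := by
    rw [← Nat.cast_add, coprimeTuples, card_filter_add_card_filter_not,
      Fintype.card_piFinset_const, card_range, Nat.cast_pow]
  have hbad := card_filter_not_coprime_le hm hr
  exact_mod_cast (by linarith : (r : ℝ) ^ m ≤ 4 * #(coprimeTuples m r))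

theorem pow_mul_div_mul_pow_le {m : ℕ} (hm : 2 ≤ m) {x : ℝ} (hx : 0 ≤ x) (r : ℝ) {s : ℝ}
    (hs : 1 ≤ s) : r ^ m * (x / (r * s)) ^ m ≤ x ^ m * (1 / s ^ 2) := by
  rcases eq_or_ne r 0 with rfl | hr
  · rw [zero_pow (by omega), zero_mul]
    positivity
  calc r ^ m * (x / (r * s)) ^ m = (x / s) ^ m := by
        rw [← mul_pow]
        field_simp
    _ ≤ x ^ m * (1 / s ^ 2) := div_pow_le_pow_mul_one_div_sq hm hx hs

theorem tsum_tsum_comp_mul_succ_mul_le (f c : ℕ → ℝ≥0∞) :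
    ∑' r, ∑' t, f (r * (t + 1)) * c t ≤ (∑' t, c t) * ∑' n, f n :=
  calc ∑' r, ∑' t, f (r * (t + 1)) * c t = ∑' t, (∑' r, f (r * (t + 1))) * c t := by
        rw [ENNReal.tsum_comm]
        simp_rw [ENNReal.tsum_mul_right]
    _ ≤ ∑' t, (∑' n, f n) * c t := ENNReal.tsum_le_tsum fun t => mul_le_mul_left
        (ENNReal.tsum_comp_le_tsum_of_injective
          (fun _ _ h => Nat.eq_of_mul_eq_mul_right t.succ_pos h) f) _
    _ = (∑' t, c t) * ∑' n, f n := by rw [ENNReal.tsum_mul_left, mul_comm]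

theorem tsum_ofReal_one_div_succ_sq_ne_top :
    ∑' t : ℕ, ENNReal.ofReal (1 / ((t : ℝ) + 1) ^ 2) ≠ ⊤ := by
  have hsum : Summable fun t : ℕ => 1 / ((t : ℝ) + 1) ^ 2 := by
    exact_mod_cast (summable_nat_add_iff 1).2 (Real.summable_one_div_nat_pow.2 one_lt_two)
  rw [← ENNReal.ofReal_tsum_of_nonneg (fun _ => by positivity) hsum]
  exact ENNReal.ofReal_ne_top

theorem ite_card_mul_iSup_le_tsum {m : ℕ} (hm : 2 ≤ m) {ψ : ℕ → ℝ} (hψ : ∀ n, 0 ≤ ψ n) (r : ℕ) :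
    (if 1 ≤ r then (#(coprimeTuples m r) : ℝ≥0∞) *
        ⨆ t : ℕ, ENNReal.ofReal ((ψ (r * (t + 1)) / (r * (t + 1))) ^ m) else 0) ≤
      ∑' t : ℕ, (if 1 ≤ r * (t + 1) then ENNReal.ofReal (ψ (r * (t + 1)) ^ m) else 0) *
        ENNReal.ofReal (1 / ((t : ℝ) + 1) ^ 2) := by
  by_cases hr : 1 ≤ r
  swap
  · simp [hr]
  rw [if_pos hr, ENNReal.mul_iSup]
  refine iSup_le fun t => le_trans ?_ (ENNReal.le_tsum t)
  rw [if_pos (Nat.one_le_iff_ne_zero.2 (by positivity))]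
  have hcard : (#(coprimeTuples m r) : ℝ≥0∞) ≤ ENNReal.ofReal ((r : ℝ) ^ m) := by
    rw [← ENNReal.ofReal_natCast]
    exact ENNReal.ofReal_le_ofReal (by exact_mod_cast card_coprimeTuples_le m r)
  calc (#(coprimeTuples m r) : ℝ≥0∞) * ENNReal.ofReal ((ψ (r * (t + 1)) / (r * (t + 1))) ^ m)
      ≤ ENNReal.ofReal ((r : ℝ) ^ m * (ψ (r * (t + 1)) / (r * (t + 1))) ^ m) := by
        rw [ENNReal.ofReal_mul (by positivity)]
        exact mul_le_mul_left hcard _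
    _ ≤ ENNReal.ofReal (ψ (r * (t + 1)) ^ m * (1 / ((t : ℝ) + 1) ^ 2)) :=
        ENNReal.ofReal_le_ofReal (pow_mul_div_mul_pow_le hm (hψ _) _ (by simp))
    _ = ENNReal.ofReal (ψ (r * (t + 1)) ^ m) * ENNReal.ofReal (1 / ((t : ℝ) + 1) ^ 2) :=
        ENNReal.ofReal_mul (pow_nonneg (hψ _) m)

theorem ite_ofReal_pow_le_four_mul {m : ℕ} (hm : 2 ≤ m) (ψ : ℕ → ℝ) (q : ℕ) :
    (if 1 ≤ q then ENNReal.ofReal (ψ q ^ m) else 0) ≤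
      4 * if 1 ≤ q then (#(coprimeTuples m q) : ℝ≥0∞) *
        ⨆ t : ℕ, ENNReal.ofReal ((ψ (q * (t + 1)) / (q * (t + 1))) ^ m) else 0 := by
  split_ifs with hq
  swap
  · exact bot_le
  have hq0 : (q : ℝ) ≠ 0 := by exact_mod_cast (Nat.one_le_iff_ne_zero.1 hq)
  calc ENNReal.ofReal (ψ q ^ m) = ((q ^ m : ℕ) : ℝ≥0∞) * ENNReal.ofReal ((ψ q / q) ^ m) := by
        rw [← ENNReal.ofReal_natCast, ← ENNReal.ofReal_mul (by positivity), Nat.cast_pow,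
          ← mul_pow, mul_div_cancel₀ _ hq0]
    _ ≤ (4 * #(coprimeTuples m q)) * ENNReal.ofReal ((ψ (q * (0 + 1)) / (q * (0 + 1))) ^ m) := by
        simp only [zero_add, mul_one]
        gcongr
        exact_mod_cast pow_le_four_mul_card_coprimeTuples hm (Nat.one_le_iff_ne_zero.1 hq)
    _ ≤ 4 * ((#(coprimeTuples m q) : ℝ≥0∞) *
          ⨆ t : ℕ, ENNReal.ofReal ((ψ (q * (t + 1)) / (q * (t + 1))) ^ m)) := by
        rw [mul_assoc]
        gcongr
        exact le_iSup_of_le 0 (by simp)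

theorem exists_le_mul_and_le_mul_of_le_mul {x y a b : ℝ≥0∞} (ha : a ≠ ⊤) (hb : b ≠ ⊤)
    (hxy : x ≤ a * y) (hyx : y ≤ b * x) :
    ∃ C : ℝ≥0∞, 0 < C ∧ C ≠ ⊤ ∧ x ≤ C * y ∧ y ≤ C * x ∧ (x = ⊤ ↔ y = ⊤) :=
  ⟨a + b + 1, by positivity, by simp [ha, hb],
    hxy.trans (mul_le_mul_left (le_self_add.trans le_self_add) _),
    hyx.trans (mul_le_mul_left (le_add_self.trans le_self_add) _),
    fun hx => by_contra fun hy => ne_top_of_le_ne_top (ENNReal.mul_ne_top ha hy) hxy hx,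
    fun hy => by_contra fun hx => ne_top_of_le_ne_top (ENNReal.mul_ne_top hb hx) hyx hy⟩

theorem catlin_gallagher_sum_comparison (m : ℕ) (hm : 2 ≤ m) (ψ : ℕ → ℝ)
    (hψ : ∀ r, 0 ≤ ψ r) :
    ∃ C : ℝ≥0∞, 0 < C ∧ C ≠ ⊤ ∧
      ((∑' r : ℕ, if 1 ≤ r then
          (Nat.card {p : Fin m → ℕ // (∀ i, p i < r) ∧
              Nat.gcd (Finset.univ.gcd fun i => p i) r = 1} : ℝ≥0∞) *
            ⨆ t : ℕ, ENNReal.ofReal ((ψ (r * (t + 1)) / (r * (t + 1))) ^ m)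
        else 0) ≤
        C * ∑' r : ℕ, if 1 ≤ r then ENNReal.ofReal (ψ r ^ m) else 0) ∧
      ((∑' r : ℕ, if 1 ≤ r then ENNReal.ofReal (ψ r ^ m) else 0) ≤
        C * ∑' r : ℕ, if 1 ≤ r then
          (Nat.card {p : Fin m → ℕ // (∀ i, p i < r) ∧
              Nat.gcd (Finset.univ.gcd fun i => p i) r = 1} : ℝ≥0∞) *
            ⨆ t : ℕ, ENNReal.ofReal ((ψ (r * (t + 1)) / (r * (t + 1))) ^ m)
        else 0) ∧
      ((∑' r : ℕ, if 1 ≤ r then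
          (Nat.card {p : Fin m → ℕ // (∀ i, p i < r) ∧
              Nat.gcd (Finset.univ.gcd fun i => p i) r = 1} : ℝ≥0∞) *
            ⨆ t : ℕ, ENNReal.ofReal ((ψ (r * (t + 1)) / (r * (t + 1))) ^ m)
        else 0) = ⊤ ↔ (∑' r : ℕ, if 1 ≤ r then ENNReal.ofReal (ψ r ^ m) else 0) = ⊤) := by
  simp only [natCard_coprime_eq_card_coprimeTuples]
  refine exists_le_mul_and_le_mul_of_le_mul tsum_ofReal_one_div_succ_sq_ne_top
    (ENNReal.ofNat_ne_top (n := 4)) ?_ ?_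
  · exact (ENNReal.tsum_le_tsum (ite_card_mul_iSup_le_tsum hm hψ)).trans
      (tsum_tsum_comp_mul_succ_mul_le (fun n => if 1 ≤ n then ENNReal.ofReal (ψ n ^ m) else 0) _)
  · exact (ENNReal.tsum_le_tsum (ite_ofReal_pow_le_four_mul hm ψ)).trans_eq ENNReal.tsum_mul_left
end

section
/- Let f be a dimension function (f : [0,∞) → [0,∞) increasing, continuous at 0 with f(0)=0), let m ≥ 1, and let ψ : ℕ → [0,∞) with ∑_{r=1}^∞ r^m · f(ψ(r)/r) < ∞. Then the Hausdorff f-measure H^f of the set A_m(ψ) = {x ∈ [0,1)^m : max_i ‖q x_i‖ < ψ(q) for infinitely many q ∈ ℕ} is zero. -/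
open MeasureTheory Set Filter Topology
open scoped ENNReal

/-!
For every `Q`, a point of `A_m(ψ)` satisfies `|x_i - p_i/q| ≤ min(ψ q, 1)/q` for some `q ≥ Q` and
some `p ∈ {0, …, q}^m`, so `A_m(ψ)` is covered by the sets of this form with `q ≥ Q`. Since `f` is
not assumed doubling, each such sup-norm ball is split into `2^m` boxes of side `min(ψ q, 1)/q`
with a corner at `p/q`, whose diameters are at most `1/Q`. The `f`-contents of the boxes with
denominator `q` add up to at most `(2(q+1))^m f(ψ q/q) ≤ 4^m q^m f(ψ q/q)`, so the cover at
level `Q` has cost bounded by a tail of a convergent series.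
-/

section CornerBox

variable {ι : Type*}

def cornerBox (y : ι → ℝ) (δ : ℝ) (s : ι → Bool) : Set (ι → ℝ) :=
  univ.pi fun i => if s i then Icc (y i - δ) (y i) else Icc (y i) (y i + δ)

lemma ediam_cornerBox_le [Fintype ι] (y : ι → ℝ) (δ : ℝ) (s : ι → Bool) :
    Metric.ediam (cornerBox y δ s) ≤ ENNReal.ofReal δ :=
  Metric.ediam_pi_le_of_le fun i => by split_ifs <;> simp [Real.ediam_Icc]

lemma exists_mem_cornerBox {x y : ι → ℝ} {δ : ℝ} (h : ∀ i, |x i - y i| ≤ δ) :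
    ∃ s, x ∈ cornerBox y δ s := by
  refine ⟨fun i => decide (x i < y i), fun i _ => ?_⟩
  have := abs_sub_le_iff.1 (h i)
  by_cases hi : x i < y i <;>
    simp only [hi, decide_true, decide_false, Bool.false_eq_true, ↓reduceIte, mem_Icc] <;>
    constructor <;> linarith

end CornerBox

lemma exists_fin_eq_round {x : ℝ} (hx : x ∈ Icc 0 1) (q : ℕ) :
    ∃ p : Fin (q + 1), (p : ℤ) = round (q * x) := by
  have hqx : 0 ≤ (q : ℝ) * x ∧ (q : ℝ) * x ≤ q :=
    ⟨mul_nonneg q.cast_nonneg hx.1, mul_le_of_le_one_right q.cast_nonneg hx.2⟩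
  have hlo : (-1 : ℝ) < round ((q : ℝ) * x) := by linarith [sub_half_lt_round ((q : ℝ) * x)]
  have hhi : (round ((q : ℝ) * x) : ℝ) < q + 1 := by linarith [round_le_add_half ((q : ℝ) * x)]
  have hlo' : -1 < round ((q : ℝ) * x) := by exact_mod_cast hlo
  have hhi' : round ((q : ℝ) * x) < q + 1 := by exact_mod_cast hhi
  exact ⟨⟨(round ((q : ℝ) * x)).toNat, by omega⟩, by simp only [Int.ofNat_toNat, sup_eq_left]; omega⟩

lemma exists_fin_abs_sub_div_le {x ε : ℝ} (hx : x ∈ Icc 0 1) {q : ℕ} (hq : 0 < q)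
    (h : |q * x - round (q * x)| < ε) : ∃ p : Fin (q + 1), |x - p / q| ≤ min ε 1 / q := by
  obtain ⟨p, hp⟩ := exists_fin_eq_round hx q
  refine ⟨p, ?_⟩
  have hq' : (0 : ℝ) < q := by exact_mod_cast hq
  have hp' : ((p : ℕ) : ℝ) = (round ((q : ℝ) * x) : ℝ) := by exact_mod_cast hp
  have : |q * x - p| ≤ min ε 1 := by
    rw [hp']
    exact le_min h.le ((abs_sub_round _).trans (by norm_num))
  rw [show x - p / q = (q * x - p) / q by field_simp, abs_div, abs_of_pos hq']
  exact div_le_div_of_nonneg_right this hq'.le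

def simultaneouslyApproximable (ι : Type*) (ψ : ℕ → ℝ) : Set (ι → ℝ) :=
  {x | (∀ i, x i ∈ Ico (0 : ℝ) 1) ∧
    {q : ℕ | 0 < q ∧ ∀ i, |(q : ℝ) * x i - round ((q : ℝ) * x i)| < ψ q}.Infinite}

section RationalBox

variable {ι : Type*}

def rationalBox (ψ : ℕ → ℝ) (q : ℕ) (p : ι → Fin (q + 1)) (s : ι → Bool) : Set (ι → ℝ) :=
  cornerBox (fun i => (p i : ℝ) / q) (min (ψ q) 1 / q) s

lemma simultaneouslyApproximable_subset_iUnion_rationalBox (ψ : ℕ → ℝ) (Q : ℕ) :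
    simultaneouslyApproximable ι ψ ⊆
      ⋃ c : Σ k : ℕ, (ι → Fin (k + Q + 1)) × (ι → Bool), rationalBox ψ (c.1 + Q) c.2.1 c.2.2 := by
  rintro x ⟨hx, hinf⟩
  obtain ⟨q, ⟨hq, hqx⟩, hQq⟩ := hinf.exists_gt Q
  obtain ⟨k, rfl⟩ : ∃ k, q = k + Q := ⟨q - Q, by omega⟩
  choose p hp using fun i => exists_fin_abs_sub_div_le (Ico_subset_Icc_self (hx i)) hq (hqx i)
  obtain ⟨s, hs⟩ := exists_mem_cornerBox hp
  exact mem_iUnion.2 ⟨⟨k, p, s⟩, hs⟩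

variable [Fintype ι]

lemma ediam_rationalBox_le (ψ : ℕ → ℝ) (q : ℕ) (p : ι → Fin (q + 1)) (s : ι → Bool) :
    Metric.ediam (rationalBox ψ q p s) ≤ ENNReal.ofReal (min (ψ q) 1 / q) :=
  ediam_cornerBox_le _ _ _

lemma ediam_rationalBox_le_inv (ψ : ℕ → ℝ) {Q q : ℕ} (hQ : 0 < Q) (hQq : Q ≤ q)
    (p : ι → Fin (q + 1)) (s : ι → Bool) :
    Metric.ediam (rationalBox ψ q p s) ≤ ENNReal.ofReal (1 / Q) := by
  refine (ediam_rationalBox_le ψ q p s).trans (ENNReal.ofReal_le_ofReal ?_)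
  calc min (ψ q) 1 / q ≤ 1 / q := div_le_div_of_nonneg_right (min_le_right _ _) q.cast_nonneg
    _ ≤ 1 / Q := one_div_le_one_div_of_le (by exact_mod_cast hQ) (by exact_mod_cast hQq)

lemma tsum_rationalBox_le [DecidableEq ι] {ψ : ℕ → ℝ} (hψ : ∀ r, 0 ≤ ψ r) {f : ℝ → ℝ}
    (hf : Monotone f) {q : ℕ} (hq : 0 < q) :
    ∑' c : (ι → Fin (q + 1)) × (ι → Bool),
        ENNReal.ofReal (f (Metric.ediam (rationalBox ψ q c.1 c.2)).toReal) ≤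
      ENNReal.ofReal (4 ^ Fintype.card ι * ((q : ℝ) ^ Fintype.card ι * f (ψ q / q))) := by
  have hterm : ∀ c : (ι → Fin (q + 1)) × (ι → Bool),
      ENNReal.ofReal (f (Metric.ediam (rationalBox ψ q c.1 c.2)).toReal) ≤
        ENNReal.ofReal (f (ψ q / q)) := by
    refine fun c => ENNReal.ofReal_le_ofReal (hf ?_)
    refine (ENNReal.toReal_le_of_le_ofReal (by have := hψ q; positivity)
      (ediam_rationalBox_le ψ q c.1 c.2)).trans ?_
    exact div_le_div_of_nonneg_right (min_le_left _ _) q.cast_nonneg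
  have hcard :
      (Fintype.card ((ι → Fin (q + 1)) × (ι → Bool)) : ℝ) ≤ (4 * q) ^ Fintype.card ι := by
    have hq1 : (1 : ℝ) ≤ q := by exact_mod_cast hq
    rw [Fintype.card_prod, Fintype.card_fun, Fintype.card_fun, Fintype.card_fin,
      Fintype.card_bool, ← mul_pow]
    push_cast
    exact pow_le_pow_left₀ (by positivity) (by linarith) _
  rw [tsum_fintype]
  refine (Finset.sum_le_card_nsmul _ _ _ fun c _ => hterm c).trans ?_
  rw [Finset.card_univ, nsmul_eq_mul, ← ENNReal.ofReal_natCast]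
  calc ENNReal.ofReal (Fintype.card ((ι → Fin (q + 1)) × (ι → Bool))) *
        ENNReal.ofReal (f (ψ q / q))
      ≤ ENNReal.ofReal ((4 * q) ^ Fintype.card ι) * ENNReal.ofReal (f (ψ q / q)) :=
        mul_le_mul_left (ENNReal.ofReal_le_ofReal hcard) _
    _ = ENNReal.ofReal (4 ^ Fintype.card ι * ((q : ℝ) ^ Fintype.card ι * f (ψ q / q))) := by
        rw [← ENNReal.ofReal_mul (by positivity), mul_pow, mul_assoc]

lemma tsum_sigma_rationalBox_le [DecidableEq ι] {ψ : ℕ → ℝ} (hψ : ∀ r, 0 ≤ ψ r) {f : ℝ → ℝ}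
    (hf : Monotone f) {Q : ℕ} (hQ : 0 < Q) :
    ∑' c : Σ k : ℕ, (ι → Fin (k + Q + 1)) × (ι → Bool),
        ENNReal.ofReal (f (Metric.ediam (rationalBox ψ (c.1 + Q) c.2.1 c.2.2)).toReal) ≤
      ∑' k : ℕ, ENNReal.ofReal (4 ^ Fintype.card ι *
        (((k + Q : ℕ) : ℝ) ^ Fintype.card ι * f (ψ (k + Q) / (k + Q : ℕ)))) := by
  rw [ENNReal.tsum_sigma']
  exact ENNReal.tsum_le_tsum fun k => tsum_rationalBox_le hψ hf (by omega)

end RationalBox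

theorem jarnik_convergence_general (m : ℕ) (f : ℝ → ℝ)
    (hf_mono : Monotone f)
    (ψ : ℕ → ℝ) (hψ : ∀ r, 0 ≤ ψ r)
    (hsum : Summable fun r : ℕ => (r : ℝ) ^ m * f (ψ r / r)) :
    Measure.mkMetric (fun r : ℝ≥0∞ => ENNReal.ofReal (f r.toReal))
      ({x : Fin m → ℝ | (∀ i, x i ∈ Ico (0:ℝ) 1) ∧
        {q : ℕ | 0 < q ∧ ∀ i,
          |(q : ℝ) * x i - round ((q : ℝ) * x i)| < ψ q}.Infinite}) = 0 := by
  set g : ℕ → ℝ≥0∞ := fun q => ENNReal.ofReal (4 ^ m * ((q : ℝ) ^ m * f (ψ q / q)))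
  have hg : ∑' q, g q ≠ ∞ := ENNReal.tsum_coe_ne_top_iff_summable.2 (hsum.mul_left _).toNNReal
  have hr : Tendsto (fun Q : ℕ => ENNReal.ofReal (1 / Q)) atTop (𝓝 0) := by
    simpa using ENNReal.tendsto_ofReal tendsto_one_div_atTop_nhds_zero_nat
  have hcover := Measure.mkMetric_le_liminf_tsum (simultaneouslyApproximable (Fin m) ψ) _ hr
    (fun Q (c : Σ k : ℕ, (Fin m → Fin (k + Q + 1)) × (Fin m → Bool)) =>
      rationalBox ψ (c.1 + Q) c.2.1 c.2.2)
    ((eventually_gt_atTop 0).mono fun Q hQ c =>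
      ediam_rationalBox_le_inv ψ hQ (Nat.le_add_left Q c.1) c.2.1 c.2.2)
    (Eventually.of_forall (simultaneouslyApproximable_subset_iUnion_rationalBox ψ))
    (fun r => ENNReal.ofReal (f r.toReal))
  refine le_antisymm (hcover.trans ?_) bot_le
  calc _ ≤ liminf (fun Q => ∑' k, g (k + Q)) atTop :=
        liminf_le_liminf <| (eventually_gt_atTop 0).mono fun Q hQ => by
          simpa only [Fintype.card_fin] using
            tsum_sigma_rationalBox_le (ι := Fin m) hψ hf_mono hQ
    _ = 0 := (ENNReal.tendsto_sum_nat_add g hg).liminf_eq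

theorem jarnik_convergence (m : ℕ) (hm : 1 ≤ m) (f : ℝ → ℝ)
    (hf_mono : Monotone f) (hf0 : f 0 = 0) (hf_nonneg : ∀ r, 0 ≤ f r)
    (hf_cont : ContinuousWithinAt f (Ici 0) 0)
    (ψ : ℕ → ℝ) (hψ : ∀ r, 0 ≤ ψ r)
    (hsum : Summable fun r : ℕ => (r : ℝ) ^ m * f (ψ r / r)) :
    Measure.mkMetric (fun r : ℝ≥0∞ => ENNReal.ofReal (f r.toReal))
      ({x : Fin m → ℝ | (∀ i, x i ∈ Ico (0:ℝ) 1) ∧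
        {q : ℕ | 0 < q ∧ ∀ i,
          |(q : ℝ) * x i - round ((q : ℝ) * x i)| < ψ q}.Infinite}) = 0 :=
  jarnik_convergence_general m f hf_mono ψ hψ hsum
end

section
/- Let n ≥ 2 and let ϑ : ℕ → [0,∞) be any function such that the set A(ϑ) = {x ∈ [0,1) : ‖qx‖ < ϑ(q) for infinitely many q} has one-dimensional Lebesgue measure zero while ∑_q ϑ(q) = ∞. Define Ψ : ℤ^n → [0,∞) by Ψ(q₁,0,…,0) = ϑ(|q₁|) for q₁ ≠ 0 and Ψ(q) = 0 otherwise. Then ∑_{q ∈ ℤ^n \ {0}} Ψ(q) = ∞, yet the set A_{n,1}(Ψ) = {x ∈ [0,1)^n : ‖q·x‖ < Ψ(q) for infinitely many q ∈ ℤ^n \ {0}} has n-dimensional Lebesgue measure zero. -/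
/-!
`Ψ` lives on the axis `ℤ e₁`, where `q = k e₁` gives `‖q · x‖ = ‖k x₁‖ = ‖|k| x₁‖` and
`Ψ q = ϑ |k|`. So `∑ Ψ` contains `∑_{r ≥ 1} ϑ r = ∞`, while every `x ∈ A_{n,1}(Ψ)` has
`x₁ ∈ A(ϑ)` (each denominator `|k|` comes from at most two `q`): `A_{n,1}(Ψ)` lies in the
preimage of the null set `A(ϑ)` under a coordinate projection.
-/

open MeasureTheory Set
open scoped ENNReal

lemma abs_neg_sub_round_neg (y : ℝ) : |-y - round (-y)| = |y - round y| := by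
  have h (z : ℝ) : |z - round z| = ‖(z : AddCircle (1 : ℝ))‖ := by simp [AddCircle.norm_eq]
  rw [h, h, AddCircle.coe_neg, norm_neg]

lemma abs_natAbs_mul_sub_round (k : ℤ) (y : ℝ) :
    |(k.natAbs : ℝ) * y - round ((k.natAbs : ℝ) * y)| = |(k : ℝ) * y - round ((k : ℝ) * y)| := by
  obtain ⟨m, rfl | rfl⟩ := Int.eq_nat_or_neg k
  · simp
  · simp [neg_mul, abs_neg_sub_round_neg]

lemma Set.Finite.preimage_natAbs {s : Set ℕ} (hs : s.Finite) : (Int.natAbs ⁻¹' s).Finite := by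
  refine ((hs.image Nat.cast).union (hs.image fun m : ℕ => -(m : ℤ))).subset ?_
  intro k hk
  obtain ⟨m, rfl | rfl⟩ := Int.eq_nat_or_neg k
  · exact Or.inl ⟨m, by simpa using hk, rfl⟩
  · exact Or.inr ⟨m, by simpa using hk, rfl⟩

def approxDenominators (ϑ : ℕ → ℝ) (x : ℝ) : Set ℕ :=
  {q | 0 < q ∧ |(q : ℝ) * x - round ((q : ℝ) * x)| < ϑ q}

def dualApproxVectors {ι : Type*} [Fintype ι] (Ψ : (ι → ℤ) → ℝ) (x : ι → ℝ) : Set (ι → ℤ) :=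
  {q | q ≠ 0 ∧ |(∑ i, (q i : ℝ) * x i) - round (∑ i, (q i : ℝ) * x i)| < Ψ q}

def axisWeight {ι : Type*} [Fintype ι] [DecidableEq ι] (i₀ : ι) (ϑ : ℕ → ℝ) (q : ι → ℤ) : ℝ :=
  if q i₀ ≠ 0 ∧ ∀ i ≠ i₀, q i = 0 then ϑ (q i₀).natAbs else 0

section axisWeight

variable {ι : Type*} [Fintype ι] [DecidableEq ι] (i₀ : ι) (ϑ : ℕ → ℝ)

lemma axisWeight_single {k : ℤ} (hk : k ≠ 0) :
    axisWeight i₀ ϑ (Pi.single i₀ k) = ϑ k.natAbs := by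
  rw [axisWeight, if_pos ⟨by simpa using hk, fun i hi => by simp [hi]⟩,
    Pi.single_eq_same]

lemma eq_single_of_axisWeight_ne_zero {q : ι → ℤ} (h : axisWeight i₀ ϑ q ≠ 0) :
    q = Pi.single i₀ (q i₀) := by
  unfold axisWeight at h
  split_ifs at h with hq
  · funext i
    by_cases hi : i = i₀
    · subst hi
      simp
    · rw [Pi.single_eq_of_ne hi, hq.2 i hi]
  · exact absurd rfl h

theorem tsum_axisWeight_eq_top (hdiv : ∑' r, ENNReal.ofReal (ϑ r) = ⊤) :
    ∑' q : ι → ℤ, ENNReal.ofReal (axisWeight i₀ ϑ q) = ⊤ := by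
  have hinj : Function.Injective fun r : ℕ => Pi.single (M := fun _ => ℤ) i₀ ((r : ℤ) + 1) :=
    (Pi.single_injective i₀).comp fun a b h => by simpa using h
  refine top_le_iff.mp ?_
  calc ⊤ = ∑' r : ℕ, ENNReal.ofReal (ϑ (r + 1)) :=
        (ENNReal.tsum_add_one_eq_top hdiv ENNReal.ofReal_ne_top).symm
    _ = ∑' r : ℕ, ENNReal.ofReal (axisWeight i₀ ϑ (Pi.single i₀ ((r : ℤ) + 1))) := by
        congr! 2 with r
        rw [axisWeight_single i₀ ϑ (by omega)]
        rfl
    _ ≤ _ := ENNReal.tsum_comp_le_tsum_of_injective hinj _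

theorem Set.Infinite.approxDenominators_of_dualApproxVectors_axisWeight {x : ι → ℝ}
    (h : (dualApproxVectors (axisWeight i₀ ϑ) x).Infinite) :
    (approxDenominators ϑ (x i₀)).Infinite := by
  contrapose! h
  refine (h.preimage_natAbs.image (Pi.single i₀)).subset ?_
  rintro q ⟨hq0, hq⟩
  obtain ⟨k, rfl⟩ : ∃ k, q = Pi.single i₀ k :=
    ⟨_, eq_single_of_axisWeight_ne_zero i₀ ϑ ((abs_nonneg _).trans_lt hq).ne'⟩
  have hk : k ≠ 0 := by rintro rfl; exact hq0 (Pi.single_zero i₀)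
  have hdot : ∑ i, ((Pi.single i₀ k : ι → ℤ) i : ℝ) * x i = k * x i₀ := by
    simp [Pi.single_apply]
  rw [hdot, axisWeight_single i₀ ϑ hk] at hq
  exact ⟨k, ⟨Int.natAbs_pos.mpr hk, by rwa [abs_natAbs_mul_sub_round]⟩, rfl⟩

theorem volume_dualApproxVectors_axisWeight_eq_zero
    (hnull : volume {x : ℝ | x ∈ Ico (0 : ℝ) 1 ∧ (approxDenominators ϑ x).Infinite} = 0) :
    volume {x : ι → ℝ | (∀ i, x i ∈ Ico (0 : ℝ) 1) ∧
      (dualApproxVectors (axisWeight i₀ ϑ) x).Infinite} = 0 := by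
  refine measure_mono_null (fun x hx => ?_) (Measure.pi_eval_preimage_null (i := i₀) _ hnull)
  exact ⟨hx.1 i₀, hx.2.approxDenominators_of_dualApproxVectors_axisWeight i₀ ϑ⟩

end axisWeight

theorem sprindzuk_primitivity_counterexample (n : ℕ) (hn : 2 ≤ n)
    (ϑ : ℕ → ℝ)
    (hdiv : (∑' r : ℕ, ENNReal.ofReal (ϑ r)) = ⊤)
    (hnull : volume {x : ℝ | x ∈ Ico (0:ℝ) 1 ∧
      {q : ℕ | 0 < q ∧ |(q : ℝ) * x - round ((q : ℝ) * x)| < ϑ q}.Infinite} = 0)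
    (Ψ : (Fin n → ℤ) → ℝ)
    (hΨ : ∀ q : Fin n → ℤ,
      Ψ q = if q (⟨0, by omega⟩ : Fin n) ≠ 0 ∧ (∀ i : Fin n, i.val ≠ 0 → q i = 0)
        then ϑ ((q (⟨0, by omega⟩ : Fin n)).natAbs) else 0) :
    (∑' q : Fin n → ℤ, ENNReal.ofReal (Ψ q)) = ⊤ ∧
    volume {x : Fin n → ℝ | (∀ i, x i ∈ Ico (0:ℝ) 1) ∧
      {q : Fin n → ℤ | q ≠ 0 ∧
        |(∑ i, (q i : ℝ) * x i) - round (∑ i, (q i : ℝ) * x i)| < Ψ q}.Infinite} = 0 := by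
  obtain rfl : Ψ = axisWeight (⟨0, by omega⟩ : Fin n) ϑ := by
    funext q
    simp only [hΨ, axisWeight, ne_eq, Fin.ext_iff]
  exact ⟨tsum_axisWeight_eq_top _ ϑ hdiv, volume_dualApproxVectors_axisWeight_eq_zero _ ϑ hnull⟩
end

section
/- Let x be irrational and let ψ_ε(r) = ε/r for a fixed ε > 0. Suppose for every irrational x there are infinitely many q ∈ ℕ with ‖qx - b‖ < (1+ε')/(√5·q) for any real b and ε' > 0 (Khintchine's inhomogeneous theorem). Then for any irrational x and almost every b ∈ [0,1], liminf_{q→∞} q·‖qx - b‖ = 0. -/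
/-!
Let `A_ε` be the set of `β ∈ ℝ/ℤ` with `q‖qx - β‖ < ε` for infinitely many `q`. Since
`q‖qx - β‖ ≤ (q + 1)‖(q + 1)x - (x + β)‖`, the preimage of `A_ε` under the rotation by `x` lies
in `A_ε`; this rotation is ergodic, so `A_ε` is null or conull. Khintchine's theorem for `Nx` and
`Nb` and a pigeonhole on the nearest integers modulo `N` put some `r/N + b` in `A_{1/N}`, so `N`
translates of `A_{1/N}` cover the circle and `A_{1/N}` is conull.
-/

open MeasureTheory Set Filter

section SeminormedAddCommGroup

variable {E : Type*} [SeminormedAddCommGroup E]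

def inhomApproxSet (ξ : E) (ε : ℝ) : Set E :=
  {β | ∃ᶠ q : ℕ in atTop, q * ‖q • ξ - β‖ < ε}

theorem preimage_add_left_inhomApproxSet_subset (ξ : E) (ε : ℝ) :
    (ξ + ·) ⁻¹' inhomApproxSet ξ ε ⊆ inhomApproxSet ξ ε := by
  intro β hβ
  rw [mem_preimage, inhomApproxSet, mem_ofPred_eq, ← map_add_atTop_eq_nat 1,
    frequently_map] at hβ
  refine hβ.mono fun q hq => lt_of_le_of_lt ?_ hq
  rw [show (q + 1) • ξ - (ξ + β) = q • ξ - β by rw [succ_nsmul]; abel]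
  gcongr
  exact_mod_cast q.le_succ

theorem measurableSet_inhomApproxSet [MeasurableSpace E] [OpensMeasurableSpace E] (ξ : E)
    (ε : ℝ) : MeasurableSet (inhomApproxSet ξ ε) := by
  have : inhomApproxSet ξ ε =
      limsup (fun q : ℕ => {β : E | q * ‖q • ξ - β‖ < ε}) atTop := by
    ext β
    simp only [inhomApproxSet, mem_ofPred_eq, mem_limsup_iff_frequently_mem]
  rw [this]
  exact MeasurableSet.measurableSet_limsup fun q =>
    (isOpen_lt (by fun_prop) continuous_const).measurableSet

end SeminormedAddCommGroup

theorem Ergodic.ae_mem_of_countable_translates_cover {G : Type*} [AddGroup G]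
    [MeasurableSpace G] [MeasurableAdd G] {μ : Measure G} [IsFiniteMeasure μ]
    [μ.IsAddLeftInvariant] [NeZero μ] {f : G → G} (hf : Ergodic f μ) {s : Set G}
    (hs : MeasurableSet s) (hfs : f ⁻¹' s ⊆ s) {t : Set G} (ht : t.Countable)
    (hcover : ∀ β, ∃ a ∈ t, a + β ∈ s) : ∀ᵐ β ∂μ, β ∈ s := by
  rcases hf.ae_empty_or_univ_of_preimage_ae_le hs.nullMeasurableSet hfs.eventuallyLE with h | h
  · have hcov : univ ⊆ ⋃ a ∈ t, (a + ·) ⁻¹' s := fun β _ =>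
      let ⟨a, ha, hβ⟩ := hcover β
      mem_biUnion ha hβ
    have : μ univ = 0 := measure_mono_null hcov <| (measure_biUnion_null_iff ht).2 fun a _ => by
      rw [measure_preimage_add]
      exact ae_eq_empty.1 h
    exact absurd (Measure.measure_univ_eq_zero.1 this) (NeZero.ne μ)
  · exact ae_iff.2 (ae_eq_univ.1 h)

namespace UnitAddCircle

theorem norm_nsmul_coe_sub_coe (q : ℕ) (x b : ℝ) :
    ‖q • (x : UnitAddCircle) - b‖ = |q * x - b - round (q * x - b)| := by
  rw [← AddCircle.coe_nsmul, ← AddCircle.coe_sub, nsmul_eq_mul, norm_eq]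

theorem norm_nsmul_nsmul_coe_sub_coe (N q : ℕ) (x b : ℝ) :
    ‖N • (q • (x : UnitAddCircle) - b)‖ =
      |q * (N * x) - N * b - round (q * (N * x) - N * b)| := by
  rw [← norm_nsmul_coe_sub_coe, ← nsmul_eq_mul, ← nsmul_eq_mul, AddCircle.coe_nsmul,
    AddCircle.coe_nsmul, nsmul_sub, smul_comm]

theorem exists_norm_sub_le_norm_nsmul_div (y : UnitAddCircle) {N : ℕ} (hN : 0 < N) :
    ∃ r < N, ‖y - ((r / N : ℝ) : UnitAddCircle)‖ ≤ ‖N • y‖ / N := by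
  obtain ⟨t, rfl⟩ := QuotientAddGroup.mk_surjective y
  set p := round (N * t)
  obtain ⟨r, hr⟩ := Int.eq_ofNat_of_zero_le (Int.emod_nonneg p (Int.natCast_ne_zero.2 hN.ne'))
  have hrN : (r : ℤ) < N := hr ▸ Int.emod_lt_of_pos p (by exact_mod_cast hN)
  have hp : (p : ℝ) = N * (p / N : ℤ) + r := by
    exact_mod_cast (hr ▸ Int.mul_ediv_add_emod p N).symm
  refine ⟨r, by exact_mod_cast hrN, ?_⟩
  have hN' : (0 : ℝ) < N := by exact_mod_cast hN
  rw [← AddCircle.coe_sub, ← AddCircle.coe_nsmul, norm_eq, norm_eq, nsmul_eq_mul]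
  calc |t - r / N - round (t - r / N)| ≤ |t - r / N - (p / N : ℤ)| := round_le _ _
    _ = |N * t - p| / N := by
      rw [hp, ← abs_of_pos hN', ← abs_div, abs_of_pos hN']
      congr 1
      field_simp
      ring

theorem exists_add_mem_inhomApproxSet {ξ β : UnitAddCircle} {N : ℕ} (hN : 0 < N) {c : ℝ}
    (h : ∃ᶠ q : ℕ in atTop, q * ‖N • (q • ξ - β)‖ < c) :
    ∃ r < N, ((r / N : ℝ) : UnitAddCircle) + β ∈ inhomApproxSet ξ (c / N) := by
  have : ∃ᶠ q : ℕ in atTop, ∃ r ∈ Iio N,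
      q * ‖q • ξ - (((r / N : ℝ) : UnitAddCircle) + β)‖ < c / N := by
    refine h.mono fun q hq => ?_
    obtain ⟨r, hr, hle⟩ := (q • ξ - β).exists_norm_sub_le_norm_nsmul_div hN
    refine ⟨r, hr, ?_⟩
    calc q * ‖q • ξ - (((r / N : ℝ) : UnitAddCircle) + β)‖
        = q * ‖q • ξ - β - ((r / N : ℝ) : UnitAddCircle)‖ := by
          rw [add_comm, sub_add_eq_sub_sub]
      _ ≤ q * (‖N • (q • ξ - β)‖ / N) := by gcongr
      _ < c / N := by rw [← mul_div_assoc]; gcongr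
  exact (frequently_exists_finite (finite_Iio N)).1 this

theorem ae_restrict_Icc_of_ae {p : UnitAddCircle → Prop} (h : ∀ᵐ β, p β) :
    ∀ᵐ b : ℝ ∂volume.restrict (Icc (0 : ℝ) 1), p b := by
  rw [Measure.restrict_congr_set Ioc_ae_eq_Icc.symm]
  simpa only [zero_add] using (UnitAddCircle.measurePreserving_mk 0).quasiMeasurePreserving.ae h

end UnitAddCircle

theorem kim_theorem
    (hKh : ∀ x : ℝ, Irrational x → ∀ b : ℝ, ∀ ε' : ℝ, 0 < ε' →
      {q : ℕ | 0 < q ∧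
        |(q : ℝ) * x - b - round ((q : ℝ) * x - b)| <
          (1 + ε') / (Real.sqrt 5 * q)}.Infinite) :
    ∀ x : ℝ, Irrational x →
      ∀ᵐ b ∂(volume.restrict (Icc (0:ℝ) 1)), ∀ ε : ℝ, 0 < ε →
        {q : ℕ | 0 < q ∧
          (q : ℝ) * |(q : ℝ) * x - b - round ((q : ℝ) * x - b)| < ε}.Infinite := by
  intro x hx
  have hKh' (b : ℝ) (N : ℕ) :
      ∃ᶠ q : ℕ in atTop, q * ‖(N + 1) • (q • (x : UnitAddCircle) - b)‖ < 1 := by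
    refine (Nat.frequently_atTop_iff_infinite.2 (hKh _ (hx.natCast_mul N.succ_ne_zero)
      ((N + 1 : ℕ) * b) 1 one_pos)).mono fun q ⟨hq, hlt⟩ => ?_
    rw [UnitAddCircle.norm_nsmul_nsmul_coe_sub_coe]
    calc _ < q * ((1 + 1) / (Real.sqrt 5 * q)) := by gcongr
      _ = 2 / Real.sqrt 5 := by field_simp; norm_num
      _ ≤ 1 := (div_le_one (by positivity)).2 (Real.le_sqrt_of_sq_le (by norm_num))
  have herg : Ergodic ((x : UnitAddCircle) + ·) :=
    ergodic_add_left_of_denseRange_zsmul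
      (AddCircle.denseRange_zsmul_coe_iff.2 (by rwa [div_one])) volume
  have hgood (N : ℕ) :
      ∀ᵐ β : UnitAddCircle, β ∈ inhomApproxSet (x : UnitAddCircle) (1 / (N + 1)) := by
    refine herg.ae_mem_of_countable_translates_cover (measurableSet_inhomApproxSet _ _)
      (preimage_add_left_inhomApproxSet_subset _ _)
      (countable_range fun r : ℕ => ((r / (N + 1 : ℕ) : ℝ) : UnitAddCircle)) fun β => ?_
    obtain ⟨b, rfl⟩ := QuotientAddGroup.mk_surjective β
    obtain ⟨r, -, hr⟩ := UnitAddCircle.exists_add_mem_inhomApproxSet N.succ_pos (hKh' b N)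
    exact ⟨_, mem_range_self r, by exact_mod_cast hr⟩
  filter_upwards [UnitAddCircle.ae_restrict_Icc_of_ae (ae_all_iff.2 hgood)] with b hb ε hε
  obtain ⟨N, hN⟩ := exists_nat_one_div_lt hε
  refine Nat.frequently_atTop_iff_infinite.1 <|
    ((hb N).and_eventually (eventually_gt_atTop 0)).mono fun q ⟨hq, hq0⟩ => ⟨hq0, ?_⟩
  rw [← UnitAddCircle.norm_nsmul_coe_sub_coe]
  exact hq.trans hN
end

section
/- For every irrational real number x and every real number b, there are infinitely many integers q ≥ 1 such that ‖q·x - b‖ < 3/q. -/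
/-!
Take a good rational approximation `p / d` of `x`, i.e. `|d x - p| < 1 / d`, with `d` large, and
let `m` be the integer nearest to `d b`. As `p` is invertible modulo `d`, some `q ∈ (d/2, 3d/2]`
satisfies `q p - d u = m` for an integer `u`. Then `d (q x - b - u) = q (d x - p) - (d b - m)` has
absolute value `< 3/2 + 1/2 = 2`, so `‖q x - b‖ < 2 / d ≤ 3 / q`, and `q > d / 2` is large.
-/

open Set

theorem Rat.finite_setOf_den_le_abs_sub_lt (x : ℝ) (N : ℕ) :
    {r : ℚ | r.den ≤ N ∧ |x - r| < 1}.Finite := by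
  set M : ℤ := ⌈(|x| + 1) * N⌉
  refine ((finite_Icc (-M) M).prod (finite_Iic N)).image (fun n : ℤ × ℕ => (n.1 / n.2 : ℚ))
    |>.subset ?_
  rintro r ⟨hrN, hxr⟩
  have hnum : |(r.num : ℝ)| ≤ (|x| + 1) * N := by
    have : (r.num : ℝ) = r * r.den := by exact_mod_cast (Rat.mul_den_eq_num r).symm
    rw [this, abs_mul, Nat.abs_cast]
    gcongr
    linarith [abs_sub_abs_le_abs_sub (r : ℝ) x, abs_sub_comm x r]
  have hnum' : |r.num| ≤ M := by
    rw [← Int.cast_le (R := ℝ), Int.cast_abs]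
    exact hnum.trans (Int.le_ceil _)
  exact ⟨(r.num, r.den), ⟨abs_le.mp hnum', hrN⟩, Rat.num_div_den r⟩

theorem Real.exists_rat_den_gt_abs_den_mul_sub_num_lt {x : ℝ} (hx : Irrational x) (N : ℕ) :
    ∃ r : ℚ, N < r.den ∧ |r.den * x - r.num| < 1 / r.den := by
  obtain ⟨r, hr, hrN⟩ := ((infinite_rat_abs_sub_lt_one_div_den_sq_of_irrational hx).sdiff
    (Rat.finite_setOf_den_le_abs_sub_lt x N)).nonempty
  have hr : |x - r| < 1 / (r.den : ℝ) ^ 2 := hr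
  have hden : (1 : ℝ) ≤ r.den := by exact_mod_cast r.pos
  refine ⟨r, ?_, ?_⟩
  · by_contra! h
    refine hrN ⟨h, hr.trans_le ?_⟩
    rw [div_le_one (by positivity)]
    nlinarith
  · have hpos : (0 : ℝ) < r.den := by positivity
    calc |r.den * x - r.num| = r.den * |x - r| := by
          rw [Rat.cast_def, ← abs_of_pos hpos, ← abs_mul, abs_of_pos hpos]
          congr 1
          field_simp
      _ < r.den * (1 / (r.den : ℝ) ^ 2) := by gcongr
      _ = 1 / r.den := by field_simp

theorem Int.exists_mul_sub_mul_eq_of_isCoprime {p d : ℤ} (hpd : IsCoprime p d) (hd : 0 < d)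
    (m : ℤ) : ∃ q u : ℤ, q * p - d * u = m ∧ d < 2 * q ∧ 2 * q ≤ 3 * d := by
  obtain ⟨a, c, hac⟩ := hpd
  obtain ⟨k, ⟨hk₁, hk₂⟩, -⟩ := existsUnique_add_zsmul_mem_Ioc hd (m * a) (d / 2)
  rw [smul_eq_mul] at hk₁ hk₂
  refine ⟨m * a + k * d, k * p - m * c, ?_, by omega, by omega⟩
  linear_combination m * hac

theorem abs_mul_sub_sub_lt {x b : ℝ} {p d q u m : ℤ} (hqpm : q * p - d * u = m) (hd : 0 < d)
    (hq : 0 < q) (hqd : 2 * q ≤ 3 * d) (hx : |d * x - p| < 1 / d) (hb : |d * b - m| ≤ 1 / 2) :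
    |q * x - b - u| < 3 / q := by
  have hd' : (0 : ℝ) < d := by exact_mod_cast hd
  have hq' : (0 : ℝ) < q := by exact_mod_cast hq
  have hqd' : 2 * (q : ℝ) ≤ 3 * d := by exact_mod_cast hqd
  have hid : (d : ℝ) * (q * x - b - u) = q * (d * x - p) - (d * b - m) := by
    rw [← hqpm]; push_cast; ring
  have hdist : d * |q * x - b - u| < 2 := by
    rw [← abs_of_pos hd', ← abs_mul, hid]
    calc |q * (d * x - p) - (d * b - m)| ≤ q * |(d : ℝ) * x - p| + |d * b - m| := by
          simpa only [abs_mul, abs_of_pos hq'] using abs_sub (q * (d * x - p)) (d * b - m)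
      _ < q * (1 / d) + 1 / 2 := add_lt_add_of_lt_of_le (by gcongr) hb
      _ ≤ 2 := by rw [mul_one_div, ← le_sub_iff_add_le, div_le_iff₀ hd']; linarith
  rw [lt_div_iff₀ hq']
  nlinarith [abs_nonneg ((q : ℝ) * x - b - u)]

theorem exists_nat_abs_mul_sub_sub_round_lt {x : ℝ} (b : ℝ) {p d : ℤ} (hpd : IsCoprime p d)
    (hd : 0 < d) (hx : |d * x - p| < 1 / d) :
    ∃ q : ℕ, d < 2 * q ∧ |q * x - b - round (q * x - b)| < 3 / q := by
  obtain ⟨q, u, hqpm, hdq, hqd⟩ := Int.exists_mul_sub_mul_eq_of_isCoprime hpd hd (round (d * b))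
  lift q to ℕ using by omega
  refine ⟨q, hdq, (round_le _ u).trans_lt ?_⟩
  have := abs_mul_sub_sub_lt hqpm hd (by omega) hqd hx (abs_sub_round (d * b))
  push_cast at this
  exact this

theorem tchebychef (x : ℝ) (hx : Irrational x) (b : ℝ) :
    {q : ℕ | 0 < q ∧
      |(q : ℝ) * x - b - round ((q : ℝ) * x - b)| < 3 / q}.Infinite := by
  refine Set.infinite_of_forall_exists_gt fun N => ?_
  obtain ⟨r, hNr, hr⟩ := Real.exists_rat_den_gt_abs_den_mul_sub_num_lt hx (2 * N)
  have hcop : IsCoprime r.num r.den := by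
    rw [Int.isCoprime_iff_gcd_eq_one]
    exact r.reduced
  obtain ⟨q, hdq, hq⟩ := exists_nat_abs_mul_sub_sub_round_lt (d := r.den) b hcop
    (by exact_mod_cast r.pos) (by simpa only [Int.cast_natCast] using hr)
  exact ⟨q, ⟨by omega, hq⟩, by omega⟩
end

section
/- Let τ > 1. The set A(τ) = {x ∈ [0,1) : ‖qx‖ < q^{-τ} for infinitely many q ∈ ℕ} satisfies: for every s > 2/(τ+1), the s-dimensional Hausdorff measure H^s(A(τ)) = 0. Consequently dim_H A(τ) ≤ 2/(τ+1). -/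
open MeasureTheory Set Filter Topology Metric
open scoped ENNReal

/-! Every `x ∈ A(τ)` lies in infinitely many of the intervals of radius `q ^ (-(τ + 1))` around
`p / q`, `0 ≤ p ≤ q`. The `s`-th powers of their diameters add up to
`∑ (q + 1) (2 q ^ (-(τ + 1))) ^ s`, which is finite once `(τ + 1) s > 2`. A point lying in
infinitely many sets of such a family is covered by the members outside any finite set of indices;
these covers have mesh and `s`-sum tending to zero, so `A(τ)` is `μH[s]`-null
(Hausdorff–Cantelli). -/

theorem hausdorffMeasure_setOf_infinite_mem_eq_zero {X ι : Type*} [EMetricSpace X]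
    [MeasurableSpace X] [BorelSpace X] [Countable ι] {s : ℝ} (hs : 0 < s) (t : ι → Set X)
    (ht : ∑' i, ediam (t i) ^ s ≠ ∞) : μH[s] {x | {i | x ∈ t i}.Infinite} = 0 := by
  set tail : Finset ι → ℝ≥0∞ := fun F => ∑' i : {i // i ∉ F}, ediam (t i) ^ s
  have htail : Tendsto tail atTop (𝓝 0) := ENNReal.tendsto_tsum_compl_atTop_zero ht
  have hradius : Tendsto (fun F => tail F ^ s⁻¹) atTop (𝓝 0) := by
    simpa [ENNReal.zero_rpow_of_pos (inv_pos.2 hs)] using htail.ennrpow_const s⁻¹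
  refine le_antisymm ?_ zero_le
  calc μH[s] {x | {i | x ∈ t i}.Infinite}
      ≤ liminf tail atTop :=
        Measure.hausdorffMeasure_le_liminf_tsum s _ _ hradius (fun F (i : {i // i ∉ F}) => t i)
          (.of_forall fun F i => (ENNReal.le_rpow_inv_iff hs).2 (ENNReal.le_tsum i))
          (.of_forall fun F x hx => by
            obtain ⟨i, hi, hiF⟩ := hx.exists_notMem_finset F
            exact mem_iUnion.2 ⟨⟨i, hiF⟩, hi⟩)
    _ = 0 := htail.liminf_eq

theorem dimH_le_of_forall_hausdorffMeasure_eq_zero {X : Type*} [EMetricSpace X]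
    [MeasurableSpace X] [BorelSpace X] {A : Set X} {a : ℝ}
    (h : ∀ s, a < s → μH[s] A = 0) : dimH A ≤ ENNReal.ofReal a := by
  refine dimH_le fun d hd => ?_
  by_contra hgt
  have had : a < d := lt_of_not_ge fun hda => hgt (by simpa using ENNReal.ofReal_le_ofReal hda)
  simp [h d had] at hd

theorem summable_natCast_add_one_mul_rpow_neg {a : ℝ} (ha : 2 < a) :
    Summable fun q : ℕ => ((q : ℝ) + 1) * (q : ℝ) ^ (-a) := by
  refine .of_nonneg_of_le (fun q => by positivity) (fun q => ?_)
    ((Real.summable_nat_rpow.2 (by linarith : 1 - a < -1)).mul_left 2)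
  rcases Nat.eq_zero_or_pos q with rfl | hq
  · simp [Real.zero_rpow (by linarith : -a ≠ 0), Real.zero_rpow (by linarith : 1 - a ≠ 0)]
  · have hq' : (1 : ℝ) ≤ q := by exact_mod_cast hq
    calc ((q : ℝ) + 1) * (q : ℝ) ^ (-a) ≤ (2 * q) * (q : ℝ) ^ (-a) := by gcongr; linarith
      _ = 2 * (q : ℝ) ^ (1 - a) := by
        rw [sub_eq_add_neg, Real.rpow_add (by linarith), Real.rpow_one]; ring

theorem abs_sub_div_lt_rpow {τ x p q : ℝ} (hq : 0 < q) (h : |q * x - p| < q ^ (-τ)) :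
    |x - p / q| < q ^ (-(τ + 1)) := by
  have hqx : q * x - p = q * (x - p / q) := by field_simp
  rw [hqx, abs_mul, abs_of_pos hq] at h
  rwa [neg_add, Real.rpow_add hq, Real.rpow_neg_one, ← div_eq_mul_inv, lt_div_iff₀' hq]

def approximableSet (τ : ℝ) : Set ℝ :=
  {x : ℝ | x ∈ Ico (0:ℝ) 1 ∧
    {q : ℕ | 0 < q ∧ |(q : ℝ) * x - round ((q : ℝ) * x)| < (q : ℝ) ^ (-τ)}.Infinite}

def approxBall (τ : ℝ) (i : Σ q : ℕ, Fin (q + 1)) : Set ℝ :=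
  closedBall (((i.2 : ℕ) : ℝ) / i.1) ((i.1 : ℝ) ^ (-(τ + 1)))

theorem exists_mem_approxBall {τ x : ℝ} (hx : x ∈ Ico (0 : ℝ) 1) {q : ℕ} (hq : 0 < q)
    (hqx : |(q : ℝ) * x - round ((q : ℝ) * x)| < (q : ℝ) ^ (-τ)) :
    ∃ p : Fin (q + 1), x ∈ approxBall τ ⟨q, p⟩ := by
  have hq' : (0 : ℝ) < q := by exact_mod_cast hq
  have hround := abs_le.1 (abs_sub_round ((q : ℝ) * x))
  have hqx0 : 0 ≤ (q : ℝ) * x := mul_nonneg hq'.le hx.1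
  have hqx1 : (q : ℝ) * x < q := mul_lt_of_lt_one_right hq' hx.2
  obtain ⟨p, hp⟩ : ∃ p : ℕ, round ((q : ℝ) * x) = p :=
    Int.eq_ofNat_of_zero_le (round_eq ((q : ℝ) * x) ▸ Int.floor_nonneg.2 (by linarith))
  have hpq : p < q + 1 := by
    have : ((p : ℤ) : ℝ) < q + 1 := by rw [← hp]; linarith
    exact_mod_cast this
  refine ⟨⟨p, hpq⟩, ?_⟩
  rw [hp] at hqx
  exact le_of_lt (abs_sub_div_lt_rpow hq' (by exact_mod_cast hqx))

theorem approximableSet_subset_setOf_infinite_mem_approxBall (τ : ℝ) :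
    approximableSet τ ⊆ {x | {i | x ∈ approxBall τ i}.Infinite} := by
  rintro x ⟨hx, hinf⟩
  choose p hp using
    fun (q : ℕ) (hq : 0 < q ∧ |(q : ℝ) * x - round ((q : ℝ) * x)| < (q : ℝ) ^ (-τ)) =>
      exists_mem_approxBall hx hq.1 hq.2
  refine (hinf.mono fun q hq => ?_).of_image Sigma.fst
  exact ⟨⟨q, p q hq⟩, hp q hq, rfl⟩

theorem ediam_approxBall (τ : ℝ) (i : Σ q : ℕ, Fin (q + 1)) :
    ediam (approxBall τ i) = ENNReal.ofReal (2 * (i.1 : ℝ) ^ (-(τ + 1))) := by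
  rw [approxBall, Real.closedBall_eq_Icc, Real.ediam_Icc]
  ring_nf

theorem tsum_ediam_approxBall_rpow_ne_top {τ s : ℝ} (hs : 0 < s) (hτs : 2 < (τ + 1) * s) :
    ∑' i, ediam (approxBall τ i) ^ s ≠ ∞ := by
  have hterm : ∀ q : ℕ, ∑' p : Fin (q + 1), ediam (approxBall τ ⟨q, p⟩) ^ s =
      ENNReal.ofReal (2 ^ s * (((q : ℝ) + 1) * (q : ℝ) ^ (-((τ + 1) * s)))) := by
    intro q
    simp_rw [tsum_fintype, ediam_approxBall]
    rw [Finset.sum_const, Finset.card_univ, Fintype.card_fin, nsmul_eq_mul,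
      ENNReal.ofReal_rpow_of_nonneg (by positivity) hs.le,
      Real.mul_rpow zero_le_two (by positivity), ← Real.rpow_mul (Nat.cast_nonneg q),
      ← ENNReal.ofReal_natCast, ← ENNReal.ofReal_mul (Nat.cast_nonneg _)]
    push_cast
    ring_nf
  have hsum := (summable_natCast_add_one_mul_rpow_neg hτs).mul_left (2 ^ s)
  rw [ENNReal.tsum_sigma', tsum_congr hterm,
    ← ENNReal.ofReal_tsum_of_nonneg (fun q => by positivity) hsum]
  exact ENNReal.ofReal_ne_top

theorem hausdorffMeasure_approximableSet_eq_zero {τ s : ℝ} (hs : 0 < s)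
    (hτs : 2 < (τ + 1) * s) : μH[s] (approximableSet τ) = 0 :=
  measure_mono_null (approximableSet_subset_setOf_infinite_mem_approxBall τ)
    (hausdorffMeasure_setOf_infinite_mem_eq_zero hs _ (tsum_ediam_approxBall_rpow_ne_top hs hτs))

theorem jarnik_besicovitch_upper (τ : ℝ) (hτ : 1 < τ) :
    (∀ s : ℝ, 2 / (τ + 1) < s →
      μH[s] {x : ℝ | x ∈ Ico (0:ℝ) 1 ∧
        {q : ℕ | 0 < q ∧
          |(q : ℝ) * x - round ((q : ℝ) * x)| < (q : ℝ) ^ (-τ)}.Infinite} = 0) ∧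
    dimH {x : ℝ | x ∈ Ico (0:ℝ) 1 ∧
        {q : ℕ | 0 < q ∧
          |(q : ℝ) * x - round ((q : ℝ) * x)| < (q : ℝ) ^ (-τ)}.Infinite} ≤
      ENNReal.ofReal (2 / (τ + 1)) := by
  have hτ1 : 0 < τ + 1 := by linarith
  have hnull : ∀ s : ℝ, 2 / (τ + 1) < s → μH[s] (approximableSet τ) = 0 := fun s hs =>
    hausdorffMeasure_approximableSet_eq_zero ((div_pos two_pos hτ1).trans hs)
      ((div_lt_iff₀' hτ1).1 hs)
  exact ⟨hnull, dimH_le_of_forall_hausdorffMeasure_eq_zero hnull⟩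
end
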